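/- arXiv:math/0009141 — 5 statements merged into one kernel-verified Lean document; each statement's English description precedes it below -/
import Mathlib

section
/- Let k be a field, A a k-algebra, and R ∈ A⊗A a unitary invertible solution of the pentagon equation. Then the coefficient spaces P = R_(l) and H = R_(r) are unital subalgebras of A, R ∈ P⊗H, and the maps Δ_r(a) = R⁻¹(1_A⊗a)R and Δ_l(a) = R(a⊗1_A)R⁻¹ satisfy Δ_r(P) ⊆ P⊗P and Δ_l(H) ⊆ H⊗H. -/
/-!
Write `S = R⁻¹`. Since the legs are algebra maps, the pentagon equation can be read as
`(id ⊗ Δ_l)(R) = R²³R¹²S²³ = R¹²R¹³` and `(Δ_r ⊗ id)(R) = S¹²R²³R¹² = R¹³R²³`.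
Slicing `R¹²R¹³` by `id ⊗ φ ⊗ ψ` gives the product of the left coefficients `(id ⊗ φ)(R)` and
`(id ⊗ ψ)(R)`, while slicing `(id ⊗ Δ_l)(R)` shows that this product is again a left coefficient;
symmetrically for right coefficients. Slicing the same identities in one leg writes
`Δ_r((id ⊗ φ)(R))` as `(id ⊗ f)(R)` with `f` valued in `P`, and `Δ_l((φ ⊗ id)(R))` as
`(f ⊗ id)(R)` with `f` valued in `H`. Finally, over a field a tensor lies in `P ⊗ Q` as soon as
its left coefficients lie in `P` and its right ones in `Q`: a tensor is determined by its slices,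
so it is fixed by `π_P ⊗ π_Q` for retractions `π_P`, `π_Q` onto `P` and `Q`.
-/

open TensorProduct

set_option maxHeartbeats 1000000
set_option synthInstance.maxHeartbeats 200000

namespace PentagonPaper

section Pentagon

variable (k : Type*) [Field k] (A : Type*) [Ring A] [Algebra k A]

/-- `x ⊗ y ↦ x ⊗ y ⊗ 1` -/
noncomputable def leg12 : A ⊗[k] A →ₐ[k] A ⊗[k] (A ⊗[k] A) :=
  Algebra.TensorProduct.map (AlgHom.id k A) Algebra.TensorProduct.includeLeft

/-- `x ⊗ y ↦ x ⊗ 1 ⊗ y` -/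
noncomputable def leg13 : A ⊗[k] A →ₐ[k] A ⊗[k] (A ⊗[k] A) :=
  Algebra.TensorProduct.map (AlgHom.id k A) Algebra.TensorProduct.includeRight

/-- `x ⊗ y ↦ 1 ⊗ x ⊗ y` -/
noncomputable def leg23 : A ⊗[k] A →ₐ[k] A ⊗[k] (A ⊗[k] A) :=
  Algebra.TensorProduct.includeRight

variable {k A}

/-- The pentagon equation `R¹²R¹³R²³ = R²³R¹²`. -/
def IsPentagon (R : A ⊗[k] A) : Prop :=
  leg12 k A R * leg13 k A R * leg23 k A R = leg23 k A R * leg12 k A R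

/-- `φ ↦ (id ⊗ φ)(R)`, i.e. the map sending a functional to the corresponding
left coefficient of `R`. -/
noncomputable def lCoefMap (R : A ⊗[k] A) : Module.Dual k A →ₗ[k] A :=
  (TensorProduct.rid k A).toLinearMap ∘ₗ LinearMap.applyₗ R ∘ₗ LinearMap.lTensorHom A

/-- `φ ↦ (φ ⊗ id)(R)`, i.e. the map sending a functional to the corresponding
right coefficient of `R`. -/
noncomputable def rCoefMap (R : A ⊗[k] A) : Module.Dual k A →ₗ[k] A :=
  (TensorProduct.lid k A).toLinearMap ∘ₗ LinearMap.applyₗ R ∘ₗ LinearMap.rTensorHom A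

/-- The space `R_(l)` of left coefficients of `R`. -/
noncomputable def lCoefs (R : A ⊗[k] A) : Submodule k A := LinearMap.range (lCoefMap R)

/-- The space `R_(r)` of right coefficients of `R`. -/
noncomputable def rCoefs (R : A ⊗[k] A) : Submodule k A := LinearMap.range (rCoefMap R)

/-- `R` is unitary if `1 ∈ R_(l) ∩ R_(r)`. -/
def IsUnitary (R : A ⊗[k] A) : Prop := (1 : A) ∈ lCoefs R ∧ (1 : A) ∈ rCoefs R

/-- The length `l(R)`: the minimal `m` such that `R = ∑_{i=1}^m aᵢ ⊗ bᵢ`. -/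
noncomputable def length (R : A ⊗[k] A) : ℕ :=
  sInf {m : ℕ | ∃ a b : Fin m → A, R = ∑ i, a i ⊗ₜ[k] b i}

/-- The left `R`-coinvariants `A^{R,l} = {a | R(a ⊗ 1) = a ⊗ 1}`. -/
noncomputable def lCoinv (R : A ⊗[k] A) : Submodule k A where
  carrier := {a : A | R * (a ⊗ₜ[k] (1 : A)) = a ⊗ₜ[k] (1 : A)}
  add_mem' := by
    intro a b ha hb
    simp only [Set.mem_setOf_eq, TensorProduct.add_tmul, mul_add] at *
    rw [ha, hb]
  zero_mem' := by simp
  smul_mem' := by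
    intro c a ha
    simp only [Set.mem_setOf_eq] at *
    rw [← TensorProduct.smul_tmul', mul_smul_comm, ha]

/-- The right `R`-coinvariants `A^{R,r} = {a | (1 ⊗ a)R = 1 ⊗ a}`. -/
noncomputable def rCoinv (R : A ⊗[k] A) : Submodule k A where
  carrier := {a : A | ((1 : A) ⊗ₜ[k] a) * R = (1 : A) ⊗ₜ[k] a}
  add_mem' := by
    intro a b ha hb
    simp only [Set.mem_setOf_eq, TensorProduct.tmul_add, add_mul] at *
    rw [ha, hb]
  zero_mem' := by simp
  smul_mem' := by
    intro c a ha
    simp only [Set.mem_setOf_eq, TensorProduct.tmul_smul, smul_mul_assoc] at *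
    rw [ha]

/-- The comultiplication `Δ_r : a ↦ R⁻¹(1 ⊗ a)R` on `A`. -/
noncomputable def deltaR (R : A ⊗[k] A) : A →ₗ[k] A ⊗[k] A where
  toFun a := Ring.inverse R * ((1 : A) ⊗ₜ[k] a) * R
  map_add' a b := by simp [TensorProduct.tmul_add, mul_add, add_mul]
  map_smul' c a := by simp [TensorProduct.tmul_smul, mul_smul_comm, smul_mul_assoc]

/-- The comultiplication `Δ_l : a ↦ R(a ⊗ 1)R⁻¹` on `A`. -/
noncomputable def deltaL (R : A ⊗[k] A) : A →ₗ[k] A ⊗[k] A where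
  toFun a := R * (a ⊗ₜ[k] (1 : A)) * Ring.inverse R
  map_add' a b := by simp [TensorProduct.add_tmul, mul_add, add_mul]
  map_smul' c a := by
    simp only [RingHom.id_apply]
    rw [← TensorProduct.smul_tmul', mul_smul_comm, smul_mul_assoc]

end Pentagon

section Coefficients

variable {k : Type*} [Field k] {A : Type*} [Ring A] [Algebra k A]

@[simp]
lemma lCoefMap_tmul (a b : A) (φ : Module.Dual k A) : lCoefMap (a ⊗ₜ[k] b) φ = φ b • a := by
  simp [lCoefMap]

@[simp]
lemma rCoefMap_tmul (a b : A) (φ : Module.Dual k A) : rCoefMap (a ⊗ₜ[k] b) φ = φ a • b := by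
  simp [rCoefMap]

@[simp]
lemma lCoefMap_zero : lCoefMap (0 : A ⊗[k] A) = 0 := by
  ext; simp [lCoefMap]

@[simp]
lemma rCoefMap_zero : rCoefMap (0 : A ⊗[k] A) = 0 := by
  ext; simp [rCoefMap]

@[simp]
lemma lCoefMap_add (t t' : A ⊗[k] A) : lCoefMap (t + t') = lCoefMap t + lCoefMap t' := by
  ext; simp [lCoefMap]

@[simp]
lemma rCoefMap_add (t t' : A ⊗[k] A) : rCoefMap (t + t') = rCoefMap t + rCoefMap t' := by
  ext; simp [rCoefMap]

lemma lCoefMap_mem_lCoefs (t : A ⊗[k] A) (φ : Module.Dual k A) : lCoefMap t φ ∈ lCoefs t :=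
  LinearMap.mem_range_self _ φ

lemma rCoefMap_mem_rCoefs (t : A ⊗[k] A) (φ : Module.Dual k A) : rCoefMap t φ ∈ rCoefs t :=
  LinearMap.mem_range_self _ φ

lemma lCoefMap_lTensor (f : A →ₗ[k] A) (t : A ⊗[k] A) (φ : Module.Dual k A) :
    lCoefMap (f.lTensor A t) φ = lCoefMap t (φ ∘ₗ f) := by
  induction t using TensorProduct.induction_on with
  | zero => simp
  | tmul a b => simp
  | add x y hx hy => simp_all

lemma lCoefMap_rTensor (f : A →ₗ[k] A) (t : A ⊗[k] A) (φ : Module.Dual k A) :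
    lCoefMap (f.rTensor A t) φ = f (lCoefMap t φ) := by
  induction t using TensorProduct.induction_on with
  | zero => simp
  | tmul a b => simp
  | add x y hx hy => simp_all

lemma rCoefMap_lTensor (f : A →ₗ[k] A) (t : A ⊗[k] A) (φ : Module.Dual k A) :
    rCoefMap (f.lTensor A t) φ = f (rCoefMap t φ) := by
  induction t using TensorProduct.induction_on with
  | zero => simp
  | tmul a b => simp
  | add x y hx hy => simp_all

lemma rCoefMap_rTensor (f : A →ₗ[k] A) (t : A ⊗[k] A) (φ : Module.Dual k A) :
    rCoefMap (f.rTensor A t) φ = rCoefMap t (φ ∘ₗ f) := by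
  induction t using TensorProduct.induction_on with
  | zero => simp
  | tmul a b => simp
  | add x y hx hy => simp_all

lemma lCoefMap_comm (t : A ⊗[k] A) (φ : Module.Dual k A) :
    lCoefMap (TensorProduct.comm k A A t) φ = rCoefMap t φ := by
  induction t using TensorProduct.induction_on with
  | zero => simp
  | tmul a b => simp
  | add x y hx hy => simp_all

lemma ext_lCoefMap {t t' : A ⊗[k] A} (h : ∀ φ, lCoefMap t φ = lCoefMap t' φ) : t = t' := by
  classical
  let b := Module.Free.chooseBasis k A
  have hcoord (s : A ⊗[k] A) (i) :
      TensorProduct.equivFinsuppOfBasisRight b s i = lCoefMap s (b.coord i) := by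
    induction s using TensorProduct.induction_on with
    | zero => simp
    | tmul x y => simp
    | add x y hx hy => simp_all
  exact (TensorProduct.equivFinsuppOfBasisRight b).injective <|
    Finsupp.ext fun i => by rw [hcoord, hcoord, h]

lemma ext_rCoefMap {t t' : A ⊗[k] A} (h : ∀ φ, rCoefMap t φ = rCoefMap t' φ) : t = t' :=
  (TensorProduct.comm k A A).injective <| ext_lCoefMap fun φ => by simp only [lCoefMap_comm, h]

lemma rTensor_eq_self_of_lCoefs_le {P : Submodule k A} {t : A ⊗[k] A} (hP : lCoefs t ≤ P)
    {π : A →ₗ[k] A} (hπ : ∀ x ∈ P, π x = x) : π.rTensor A t = t :=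
  ext_lCoefMap fun φ => by rw [lCoefMap_rTensor, hπ _ (hP (lCoefMap_mem_lCoefs t φ))]

lemma lTensor_eq_self_of_rCoefs_le {Q : Submodule k A} {t : A ⊗[k] A} (hQ : rCoefs t ≤ Q)
    {π : A →ₗ[k] A} (hπ : ∀ x ∈ Q, π x = x) : π.lTensor A t = t :=
  ext_rCoefMap fun φ => by rw [rCoefMap_lTensor, hπ _ (hQ (rCoefMap_mem_rCoefs t φ))]

lemma mem_range_map_subtype_of_le {P Q : Submodule k A} {t : A ⊗[k] A} (hP : lCoefs t ≤ P)
    (hQ : rCoefs t ≤ Q) : t ∈ LinearMap.range (TensorProduct.map P.subtype Q.subtype) := by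
  obtain ⟨p, hp⟩ := P.subtype.exists_leftInverse_of_injective P.ker_subtype
  obtain ⟨q, hq⟩ := Q.subtype.exists_leftInverse_of_injective Q.ker_subtype
  have hπ {S : Submodule k A} {s : A →ₗ[k] S} (hs : s ∘ₗ S.subtype = LinearMap.id) :
      ∀ x ∈ S, (S.subtype ∘ₗ s) x = x := fun x hx => by
    simpa using congrArg S.subtype (LinearMap.congr_fun hs ⟨x, hx⟩)
  refine ⟨TensorProduct.map p q t, ?_⟩
  rw [← LinearMap.comp_apply, ← TensorProduct.map_comp, ← LinearMap.lTensor_comp_rTensor,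
    LinearMap.comp_apply, rTensor_eq_self_of_lCoefs_le hP (hπ hp),
    lTensor_eq_self_of_rCoefs_le hQ (hπ hq)]

lemma lTensor_mem_range_map_subtype {P Q : Submodule k A} {t : A ⊗[k] A} (hP : lCoefs t ≤ P)
    {f : A →ₗ[k] A} (hf : ∀ a, f a ∈ Q) :
    f.lTensor A t ∈ LinearMap.range (TensorProduct.map P.subtype Q.subtype) := by
  refine mem_range_map_subtype_of_le ?_ ?_
  · rintro _ ⟨φ, rfl⟩
    exact lCoefMap_lTensor f t φ ▸ hP (lCoefMap_mem_lCoefs t _)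
  · rintro _ ⟨φ, rfl⟩
    exact rCoefMap_lTensor f t φ ▸ hf _

lemma rTensor_mem_range_map_subtype {P Q : Submodule k A} {t : A ⊗[k] A} (hQ : rCoefs t ≤ Q)
    {f : A →ₗ[k] A} (hf : ∀ a, f a ∈ P) :
    f.rTensor A t ∈ LinearMap.range (TensorProduct.map P.subtype Q.subtype) := by
  refine mem_range_map_subtype_of_le ?_ ?_
  · rintro _ ⟨φ, rfl⟩
    exact lCoefMap_rTensor f t φ ▸ hf _
  · rintro _ ⟨φ, rfl⟩
    exact rCoefMap_rTensor f t φ ▸ hQ (rCoefMap_mem_rCoefs t _)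

end Coefficients

section ThreeLegs

variable {k : Type*} [Field k] {A : Type*} [Ring A] [Algebra k A]

local notation "assoc" => Algebra.TensorProduct.assoc k k k A A A

@[simp] lemma leg12_tmul (a b : A) : leg12 k A (a ⊗ₜ b) = a ⊗ₜ (b ⊗ₜ 1) := rfl
@[simp] lemma leg13_tmul (a b : A) : leg13 k A (a ⊗ₜ b) = a ⊗ₜ (1 ⊗ₜ b) := rfl
@[simp] lemma leg23_apply (u : A ⊗[k] A) : leg23 k A u = 1 ⊗ₜ u := rfl

lemma assoc_symm_leg12 (u : A ⊗[k] A) : (assoc).symm (leg12 k A u) = u ⊗ₜ 1 := by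
  induction u using TensorProduct.induction_on with
  | zero => simp
  | tmul a b => simp
  | add x y hx hy => simp_all [TensorProduct.add_tmul]

lemma lTensor_deltaL (R v : A ⊗[k] A) :
    (deltaL R).lTensor A v = leg23 k A R * leg12 k A v * leg23 k A (Ring.inverse R) := by
  induction v using TensorProduct.induction_on with
  | zero => simp
  | tmul a b => simp [deltaL, Algebra.TensorProduct.tmul_mul_tmul]
  | add x y hx hy => simp_all [mul_add, add_mul]

lemma rTensor_deltaR (R v : A ⊗[k] A) :
    (deltaR R).rTensor A v =
      (assoc).symm (leg12 k A (Ring.inverse R) * leg23 k A v * leg12 k A R) := by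
  induction v using TensorProduct.induction_on with
  | zero => simp
  | tmul a b => simp [map_mul, assoc_symm_leg12, deltaR, Algebra.TensorProduct.tmul_mul_tmul]
  | add x y hx hy => simp_all [TensorProduct.tmul_add, mul_add, add_mul]

lemma leg13_mul_leg23 (u v : A ⊗[k] A) :
    leg13 k A u * leg23 k A v =
      (LinearMap.mulRight k v ∘ₗ Algebra.TensorProduct.includeRight.toLinearMap).lTensor A u := by
  induction u using TensorProduct.induction_on with
  | zero => simp
  | tmul a b => simp [Algebra.TensorProduct.tmul_mul_tmul]
  | add x y hx hy => simp_all [add_mul]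

lemma assoc_symm_leg12_mul_leg13 (u v : A ⊗[k] A) :
    (assoc).symm (leg12 k A u * leg13 k A v) =
      (LinearMap.mulLeft k u ∘ₗ Algebra.TensorProduct.includeLeft.toLinearMap).rTensor A v := by
  induction v using TensorProduct.induction_on with
  | zero => simp
  | tmul a b => simp [assoc_symm_leg12, Algebra.TensorProduct.tmul_mul_tmul]
  | add x y hx hy => simp_all [mul_add]

lemma lCoefMap_one_tmul_mul (b : A) (t : A ⊗[k] A) (φ : Module.Dual k A) :
    lCoefMap ((1 ⊗ₜ b) * t) φ = lCoefMap t (φ ∘ₗ LinearMap.mulLeft k b) := by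
  induction t using TensorProduct.induction_on with
  | zero => simp
  | tmul a c => simp [Algebra.TensorProduct.tmul_mul_tmul]
  | add x y hx hy => simp_all [mul_add]

lemma rCoefMap_mul_tmul_one (t : A ⊗[k] A) (c : A) (φ : Module.Dual k A) :
    rCoefMap (t * (c ⊗ₜ 1)) φ = rCoefMap t (φ ∘ₗ LinearMap.mulRight k c) := by
  induction t using TensorProduct.induction_on with
  | zero => simp
  | tmul a b => simp [Algebra.TensorProduct.tmul_mul_tmul]
  | add x y hx hy => simp_all [add_mul]

lemma lCoefMap_mul_lCoefMap (u v : A ⊗[k] A) (φ ψ : Module.Dual k A) :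
    lCoefMap u φ * lCoefMap v ψ =
      TensorProduct.rid k A ((TensorProduct.dualDistrib k A A (φ ⊗ₜ ψ)).lTensor A
        (leg12 k A u * leg13 k A v)) := by
  induction u using TensorProduct.induction_on with
  | zero => simp
  | add x y hx hy => simp_all [add_mul]
  | tmul a b =>
    induction v using TensorProduct.induction_on with
    | zero => simp
    | add x y hx hy => simp_all [mul_add]
    | tmul c d =>
      simp [Algebra.TensorProduct.tmul_mul_tmul, smul_comm (ψ _) (φ _), mul_smul]

lemma rCoefMap_mul_rCoefMap (u v : A ⊗[k] A) (φ ψ : Module.Dual k A) :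
    rCoefMap u φ * rCoefMap v ψ =
      TensorProduct.lid k A ((TensorProduct.dualDistrib k A A (φ ⊗ₜ ψ)).rTensor A
        ((assoc).symm (leg13 k A u * leg23 k A v))) := by
  induction u using TensorProduct.induction_on with
  | zero => simp
  | add x y hx hy => simp_all [add_mul]
  | tmul a b =>
    induction v using TensorProduct.induction_on with
    | zero => simp
    | add x y hx hy => simp_all [mul_add, TensorProduct.tmul_add]
    | tmul c d =>
      simp [Algebra.TensorProduct.tmul_mul_tmul, smul_comm (ψ _) (φ _), mul_smul]

lemma apply_lCoefMap (g : A →ₗ[k] A ⊗[k] A) (t : A ⊗[k] A) (φ : Module.Dual k A) :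
    g (lCoefMap t φ) =
      ((TensorProduct.rid k A).toLinearMap ∘ₗ φ.lTensor A).lTensor A (assoc (g.rTensor A t)) := by
  induction t using TensorProduct.induction_on with
  | zero => simp
  | add x y hx hy => simp_all
  | tmul a b =>
    rw [lCoefMap_tmul, map_smul, LinearMap.rTensor_tmul]
    generalize g a = x
    induction x using TensorProduct.induction_on with
    | zero => simp
    | add x y hx hy => simp_all [TensorProduct.add_tmul]
    | tmul c d => simp [TensorProduct.tmul_smul]

lemma apply_rCoefMap (g : A →ₗ[k] A ⊗[k] A) (t : A ⊗[k] A) (φ : Module.Dual k A) :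
    g (rCoefMap t φ) =
      ((TensorProduct.lid k A).toLinearMap ∘ₗ φ.rTensor A).rTensor A
        ((assoc).symm (g.lTensor A t)) := by
  induction t using TensorProduct.induction_on with
  | zero => simp
  | add x y hx hy => simp_all
  | tmul a b =>
    rw [rCoefMap_tmul, map_smul, LinearMap.lTensor_tmul]
    generalize g b = x
    induction x using TensorProduct.induction_on with
    | zero => simp
    | add x y hx hy => simp_all [TensorProduct.tmul_add]
    | tmul c d => simp [TensorProduct.smul_tmul']

lemma IsPentagon.lTensor_deltaL_self {R : A ⊗[k] A} (hpent : IsPentagon R) (hinv : IsUnit R) :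
    (deltaL R).lTensor A R = leg12 k A R * leg13 k A R := by
  rw [lTensor_deltaL, ← hpent, mul_assoc _ (leg23 k A R), ← map_mul,
    Ring.mul_inverse_cancel R hinv, map_one, mul_one]

lemma IsPentagon.rTensor_deltaR_self {R : A ⊗[k] A} (hpent : IsPentagon R) (hinv : IsUnit R) :
    (deltaR R).rTensor A R = (assoc).symm (leg13 k A R * leg23 k A R) := by
  rw [rTensor_deltaR, mul_assoc, ← hpent, ← mul_assoc, ← mul_assoc, ← map_mul,
    Ring.inverse_mul_cancel R hinv, map_one, one_mul]

lemma IsPentagon.mul_mem_lCoefs {R : A ⊗[k] A} (hpent : IsPentagon R) (hinv : IsUnit R)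
    {x y : A} (hx : x ∈ lCoefs R) (hy : y ∈ lCoefs R) : x * y ∈ lCoefs R := by
  obtain ⟨φ, rfl⟩ := hx
  obtain ⟨ψ, rfl⟩ := hy
  rw [lCoefMap_mul_lCoefMap, ← hpent.lTensor_deltaL_self hinv, ← LinearMap.lTensor_comp_apply]
  exact lCoefMap_mem_lCoefs R _

lemma IsPentagon.mul_mem_rCoefs {R : A ⊗[k] A} (hpent : IsPentagon R) (hinv : IsUnit R)
    {x y : A} (hx : x ∈ rCoefs R) (hy : y ∈ rCoefs R) : x * y ∈ rCoefs R := by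
  obtain ⟨φ, rfl⟩ := hx
  obtain ⟨ψ, rfl⟩ := hy
  rw [rCoefMap_mul_rCoefMap, ← hpent.rTensor_deltaR_self hinv, ← LinearMap.rTensor_comp_apply]
  exact rCoefMap_mem_rCoefs R _

lemma IsPentagon.deltaR_mem_range {R : A ⊗[k] A} (hpent : IsPentagon R) (hinv : IsUnit R)
    {x : A} (hx : x ∈ lCoefs R) :
    deltaR R x ∈ LinearMap.range (TensorProduct.map (lCoefs R).subtype (lCoefs R).subtype) := by
  obtain ⟨φ, rfl⟩ := hx
  rw [apply_lCoefMap, hpent.rTensor_deltaR_self hinv, AlgEquiv.apply_symm_apply, leg13_mul_leg23,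
    ← LinearMap.lTensor_comp_apply]
  refine lTensor_mem_range_map_subtype le_rfl fun b => ?_
  exact lCoefMap_one_tmul_mul b R φ ▸ lCoefMap_mem_lCoefs R _

lemma IsPentagon.deltaL_mem_range {R : A ⊗[k] A} (hpent : IsPentagon R) (hinv : IsUnit R)
    {y : A} (hy : y ∈ rCoefs R) :
    deltaL R y ∈ LinearMap.range (TensorProduct.map (rCoefs R).subtype (rCoefs R).subtype) := by
  obtain ⟨φ, rfl⟩ := hy
  rw [apply_rCoefMap, hpent.lTensor_deltaL_self hinv, assoc_symm_leg12_mul_leg13,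
    ← LinearMap.rTensor_comp_apply]
  refine rTensor_mem_range_map_subtype le_rfl fun c => ?_
  exact rCoefMap_mul_tmul_one R c φ ▸ rCoefMap_mem_rCoefs R _

end ThreeLegs

/-- **Statement 3.** For a unitary invertible solution `R` of the pentagon equation, the
coefficient spaces `P = R_(l)` and `H = R_(r)` are unital subalgebras of `A`, `R ∈ P ⊗ H`,
and `Δ_r(P) ⊆ P ⊗ P`, `Δ_l(H) ⊆ H ⊗ H`. -/
theorem coefficient_spaces_are_subalgebras
    {k : Type u} [Field k] {A : Type v} [Ring A] [Algebra k A]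
    (R : A ⊗[k] A) (hinv : IsUnit R) (hpent : IsPentagon R) (huni : IsUnitary R) :
    (1 : A) ∈ lCoefs R ∧
    (∀ x ∈ lCoefs R, ∀ y ∈ lCoefs R, x * y ∈ lCoefs R) ∧
    (1 : A) ∈ rCoefs R ∧
    (∀ x ∈ rCoefs R, ∀ y ∈ rCoefs R, x * y ∈ rCoefs R) ∧
    R ∈ LinearMap.range
      (TensorProduct.map (lCoefs R).subtype (rCoefs R).subtype) ∧
    (∀ x ∈ lCoefs R, deltaR R x ∈ LinearMap.range
      (TensorProduct.map (lCoefs R).subtype (lCoefs R).subtype)) ∧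
    (∀ y ∈ rCoefs R, deltaL R y ∈ LinearMap.range
      (TensorProduct.map (rCoefs R).subtype (rCoefs R).subtype)) :=
  ⟨huni.1, fun _ hx _ hy => hpent.mul_mem_lCoefs hinv hx hy, huni.2,
    fun _ hx _ hy => hpent.mul_mem_rCoefs hinv hx hy, mem_range_map_subtype_of_le le_rfl le_rfl,
    fun _ hx => hpent.deltaR_mem_range hinv hx, fun _ hy => hpent.deltaL_mem_range hinv hy⟩

end PentagonPaper
end

section
/- Let k be a field, A a finite-dimensional k-algebra, R ∈ A⊗A an invertible solution of the pentagon equation, P = P(A,R) with counit ε_P, and H = H(A,R) with counit ε_H. Then: (1) for every right R-invariant a ∈ {a ∈ A : (a⊗1_A)R = a⊗1_A} and every x ∈ P one has a·x = ε_P(x)·a; hence for any right P-module map π_P : A → P, the element π_P(a) is a right integral in P, i.e. π_P(a)·x = ε_P(x)·π_P(a) for all x ∈ P. (2) Dually, for every left R-invariant a ∈ {a ∈ A : R(1_A⊗a) = 1_A⊗a} and any left H-module map π_H : A → H, the element π_H(a) is a left integral in H, i.e. y·π_H(a) = ε_H(y)·π_H(a) for all y ∈ H. -/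
open TensorProduct

set_option maxHeartbeats 1000000
set_option synthInstance.maxHeartbeats 200000

namespace PentagonPaper

section Realizes

variable {k : Type*} [Field k] {A : Type*} [Ring A] [Algebra k A]
variable {L : Type*} [Ring L] [HopfAlgebra k L]

/-- `f` realizes the Hopf algebra `L` as the Hopf algebra
`P(A,R) = ` (`R_(l)`, multiplication of `A`, `Δ_r(x) = R⁻¹(1⊗x)R`):
`f` is an isomorphism of algebras from `L` onto the subalgebra `R_(l)` of `A`
transporting the comultiplication of `L` to `Δ_r`. -/
def RealizesP (R : A ⊗[k] A) (f : L →ₗ[k] A) : Prop :=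
  Function.Injective f ∧ LinearMap.range f = lCoefs R ∧
    f 1 = 1 ∧ (∀ x y : L, f (x * y) = f x * f y) ∧
    ∀ x : L, TensorProduct.map f f (Coalgebra.comul x) =
      Ring.inverse R * ((1 : A) ⊗ₜ[k] f x) * R

/-- `f` realizes the Hopf algebra `L` as the Hopf algebra
`H(A,R) = ` (`R_(r)`, multiplication of `A`, `Δ_l(y) = R(y⊗1)R⁻¹`). -/
def RealizesH (R : A ⊗[k] A) (f : L →ₗ[k] A) : Prop :=
  Function.Injective f ∧ LinearMap.range f = rCoefs R ∧
    f 1 = 1 ∧ (∀ x y : L, f (x * y) = f x * f y) ∧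
    ∀ x : L, TensorProduct.map f f (Coalgebra.comul x) =
      R * (f x ⊗ₜ[k] (1 : A)) * Ring.inverse R

end Realizes

section Aux

variable {k : Type*} [Field k] {A : Type*} [Ring A] [Algebra k A]

/-- Every right `R`-invariant `a` satisfies `a · ι l = ε(l) • a`. -/
theorem right_inv_mul {P : Type*} [Ring P] [HopfAlgebra k P]
    (R : A ⊗[k] A) (hinv : IsUnit R)
    (iota : P →ₗ[k] A) (hiota : RealizesP R iota)
    {a : A} (ha : (a ⊗ₜ[k] (1 : A)) * R = a ⊗ₜ[k] (1 : A)) (l : P) :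
    a * iota l = Coalgebra.counit (R := k) l • a := by
  obtain ⟨hinj, hrange, hone, hmul, hcom⟩ := hiota
  by_cases ha0 : a = 0
  · simp [ha0]
  obtain ⟨f, hf⟩ : ∃ f : Module.Dual k A, f a = 1 := by
    have h : ¬ ∀ φ : Module.Dual k A, φ a = 0 := by
      rw [Module.forall_dual_apply_eq_zero_iff]; exact ha0
    push_neg at h
    obtain ⟨φ, hφ⟩ := h
    exact ⟨(φ a)⁻¹ • φ, by simp [inv_mul_cancel₀ hφ]⟩
  set χ : P →ₗ[k] k := f ∘ₗ (LinearMap.mulLeft k a) ∘ₗ iota with hχdef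
  have hχ : ∀ p : P, χ p = f (a * iota p) := fun p => rfl
  -- Step 1: `a * iota p` is a multiple of `a`, with coefficient `χ p`.
  have key : ∀ p : P, a * iota p = χ p • a := by
    intro p
    have hp : iota p ∈ lCoefs R := hrange ▸ LinearMap.mem_range_self iota p
    obtain ⟨φ, hφ⟩ := hp
    have hgen : ∀ t : A ⊗[k] A,
        a * (TensorProduct.rid k A) ((LinearMap.lTensor A φ) t)
          = (TensorProduct.rid k A) ((LinearMap.lTensor A φ) ((a ⊗ₜ[k] (1:A)) * t)) := by
      intro t
      induction t using TensorProduct.induction_on with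
      | zero => simp
      | tmul b c => simp [Algebra.TensorProduct.tmul_mul_tmul, mul_smul_comm]
      | add x y hx hy => simp only [map_add, mul_add, add_mul, hx, hy]
    have hco : lCoefMap R φ = (TensorProduct.rid k A) ((LinearMap.lTensor A φ) R) := rfl
    have hval : a * iota p = φ 1 • a := by
      rw [← hφ, hco, hgen R, ha]
      simp
    rw [hval, hχ, hval, map_smul, hf]
    simp
  -- Step 2: comultiplication computation.
  set D : P ⊗[k] P := Coalgebra.comul (R := k) l with hD
  have hRinv : (a ⊗ₜ[k] (1:A)) * Ring.inverse R = a ⊗ₜ[k] (1:A) := by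
    have h := congrArg (· * Ring.inverse R) ha
    simpa [mul_assoc, Ring.mul_inverse_cancel R hinv] using h.symm
  have hA : (a ⊗ₜ[k] (1:A)) * TensorProduct.map iota iota D = a ⊗ₜ[k] iota l := by
    rw [hD, hcom l, ← mul_assoc, ← mul_assoc, hRinv, Algebra.TensorProduct.tmul_mul_tmul,
      one_mul, mul_one]
    have h1 : a ⊗ₜ[k] iota l = ((1:A) ⊗ₜ[k] iota l) * (a ⊗ₜ[k] (1:A)) := by
      simp [Algebra.TensorProduct.tmul_mul_tmul]
    rw [h1, mul_assoc, ha]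
  have hB : ∀ t : P ⊗[k] P, (a ⊗ₜ[k] (1:A)) * TensorProduct.map iota iota t
      = a ⊗ₜ[k] iota ((TensorProduct.lid k P) ((LinearMap.rTensor P χ) t)) := by
    intro t
    induction t using TensorProduct.induction_on with
    | zero => simp
    | tmul p q =>
        simp only [TensorProduct.map_tmul, LinearMap.rTensor_tmul, TensorProduct.lid_tmul,
          Algebra.TensorProduct.tmul_mul_tmul, one_mul, key p, map_smul]
        rw [TensorProduct.smul_tmul]
    | add x y hx hy => simp only [map_add, mul_add, TensorProduct.tmul_add, hx, hy]
  set m : P := (TensorProduct.lid k P) ((LinearMap.rTensor P χ) D) with hm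
  have heq : a ⊗ₜ[k] iota m = a ⊗ₜ[k] iota l := by rw [hm, ← hB D, hA]
  have hml : m = l := by
    apply hinj
    have h2 := congrArg (fun t => (TensorProduct.lid k A) ((LinearMap.rTensor A f) t)) heq
    simpa [hf] using h2
  -- Step 3: identify `χ l` with `ε l`.
  have h2 : ∀ t : P ⊗[k] P,
      Coalgebra.counit (R := k) ((TensorProduct.lid k P) ((LinearMap.rTensor P χ) t))
        = χ ((TensorProduct.rid k P) ((LinearMap.lTensor P (Coalgebra.counit (R := k))) t)) := by
    intro t
    induction t using TensorProduct.induction_on with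
    | zero => simp
    | tmul p q => simp [mul_comm]
    | add x y hx hy => simp only [map_add, hx, hy]
  have h3 : (TensorProduct.rid k P)
      ((LinearMap.lTensor P (Coalgebra.counit (R := k))) D) = l := by
    rw [hD, Coalgebra.lTensor_counit_comul l]; simp
  have hεχ : Coalgebra.counit (R := k) l = χ l := by
    conv_lhs => rw [← hml]
    rw [hm, h2 D, h3]
  rw [key l, hεχ]

/-- Every left `R`-invariant `a` satisfies `κ l · a = ε(l) • a`. -/
theorem left_inv_mul {Q : Type*} [Ring Q] [HopfAlgebra k Q]
    (R : A ⊗[k] A) (hinv : IsUnit R)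
    (kappa : Q →ₗ[k] A) (hkappa : RealizesH R kappa)
    {a : A} (ha : R * ((1 : A) ⊗ₜ[k] a) = (1 : A) ⊗ₜ[k] a) (l : Q) :
    kappa l * a = Coalgebra.counit (R := k) l • a := by
  obtain ⟨hinj, hrange, hone, hmul, hcom⟩ := hkappa
  by_cases ha0 : a = 0
  · simp [ha0]
  obtain ⟨f, hf⟩ : ∃ f : Module.Dual k A, f a = 1 := by
    have h : ¬ ∀ φ : Module.Dual k A, φ a = 0 := by
      rw [Module.forall_dual_apply_eq_zero_iff]; exact ha0
    push_neg at h
    obtain ⟨φ, hφ⟩ := h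
    exact ⟨(φ a)⁻¹ • φ, by simp [inv_mul_cancel₀ hφ]⟩
  set χ : Q →ₗ[k] k := f ∘ₗ (LinearMap.mulRight k a) ∘ₗ kappa with hχdef
  have hχ : ∀ p : Q, χ p = f (kappa p * a) := fun p => rfl
  have key : ∀ p : Q, kappa p * a = χ p • a := by
    intro p
    have hp : kappa p ∈ rCoefs R := hrange ▸ LinearMap.mem_range_self kappa p
    obtain ⟨φ, hφ⟩ := hp
    have hgen : ∀ t : A ⊗[k] A,
        (TensorProduct.lid k A) ((LinearMap.rTensor A φ) t) * a
          = (TensorProduct.lid k A) ((LinearMap.rTensor A φ) (t * ((1:A) ⊗ₜ[k] a))) := by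
      intro t
      induction t using TensorProduct.induction_on with
      | zero => simp
      | tmul b c => simp [Algebra.TensorProduct.tmul_mul_tmul, smul_mul_assoc]
      | add x y hx hy => simp only [map_add, mul_add, add_mul, hx, hy]
    have hco : rCoefMap R φ = (TensorProduct.lid k A) ((LinearMap.rTensor A φ) R) := rfl
    have hval : kappa p * a = φ 1 • a := by
      rw [← hφ, hco, hgen R, ha]
      simp
    rw [hval, hχ, hval, map_smul, hf]
    simp
  set D : Q ⊗[k] Q := Coalgebra.comul (R := k) l with hD
  have hRinv : Ring.inverse R * ((1:A) ⊗ₜ[k] a) = (1:A) ⊗ₜ[k] a := by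
    have h := congrArg (Ring.inverse R * ·) ha
    simpa [← mul_assoc, Ring.inverse_mul_cancel R hinv] using h.symm
  have hA : TensorProduct.map kappa kappa D * ((1:A) ⊗ₜ[k] a) = kappa l ⊗ₜ[k] a := by
    rw [hD, hcom l, mul_assoc, mul_assoc, hRinv, Algebra.TensorProduct.tmul_mul_tmul,
      one_mul, mul_one]
    have h1 : kappa l ⊗ₜ[k] a = ((1:A) ⊗ₜ[k] a) * (kappa l ⊗ₜ[k] (1:A)) := by
      simp [Algebra.TensorProduct.tmul_mul_tmul]
    rw [h1, ← mul_assoc, ha]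
  have hB : ∀ t : Q ⊗[k] Q, TensorProduct.map kappa kappa t * ((1:A) ⊗ₜ[k] a)
      = kappa ((TensorProduct.rid k Q) ((LinearMap.lTensor Q χ) t)) ⊗ₜ[k] a := by
    intro t
    induction t using TensorProduct.induction_on with
    | zero => simp
    | tmul p q =>
        simp only [TensorProduct.map_tmul, LinearMap.lTensor_tmul, TensorProduct.rid_tmul,
          Algebra.TensorProduct.tmul_mul_tmul, mul_one, key q, map_smul]
        rw [TensorProduct.smul_tmul]
    | add x y hx hy => simp only [map_add, add_mul, TensorProduct.add_tmul, hx, hy]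
  set m : Q := (TensorProduct.rid k Q) ((LinearMap.lTensor Q χ) D) with hm
  have heq : kappa m ⊗ₜ[k] a = kappa l ⊗ₜ[k] a := by rw [hm, ← hB D, hA]
  have hml : m = l := by
    apply hinj
    have h2 := congrArg (fun t => (TensorProduct.rid k A) ((LinearMap.lTensor A f) t)) heq
    simpa [hf] using h2
  have h2 : ∀ t : Q ⊗[k] Q,
      Coalgebra.counit (R := k) ((TensorProduct.rid k Q) ((LinearMap.lTensor Q χ) t))
        = χ ((TensorProduct.lid k Q) ((LinearMap.rTensor Q (Coalgebra.counit (R := k))) t)) := by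
    intro t
    induction t using TensorProduct.induction_on with
    | zero => simp
    | tmul p q => simp [mul_comm]
    | add x y hx hy => simp only [map_add, hx, hy]
  have h3 : (TensorProduct.lid k Q)
      ((LinearMap.rTensor Q (Coalgebra.counit (R := k))) D) = l := by
    rw [hD, Coalgebra.rTensor_counit_comul l]; simp
  have hεχ : Coalgebra.counit (R := k) l = χ l := by
    conv_lhs => rw [← hml]
    rw [hm, h2 D, h3]
  rw [key l, hεχ]

end Aux

/-- **Statement 16.** Let `A` be finite-dimensional, `R ∈ A ⊗ A` an invertible solution of the
pentagon equation, `P = P(A,R)` (realized by `ι`) and `H = H(A,R)` (realized by `κ`).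
(1) Every right `R`-invariant `a` satisfies `a·x = ε_P(x)·a` for `x ∈ P`; hence for any right
`P`-module map `π_P : A → P`, `π_P(a)` is a right integral in `P`.
(2) Dually, every left `R`-invariant `a` gives left integrals `π_H(a)` in `H` for any left
`H`-module map `π_H : A → H`. -/
theorem invariants_give_integrals
    {k : Type u} [Field k] {A : Type v} [Ring A] [Algebra k A] [FiniteDimensional k A]
    {P : Type w} [Ring P] [HopfAlgebra k P] {Q : Type x} [Ring Q] [HopfAlgebra k Q]
    (R : A ⊗[k] A) (hinv : IsUnit R) (hpent : IsPentagon R)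
    (iota : P →ₗ[k] A) (hiota : RealizesP R iota)
    (kappa : Q →ₗ[k] A) (hkappa : RealizesH R kappa) :
    (∀ a : A, (a ⊗ₜ[k] (1 : A)) * R = a ⊗ₜ[k] (1 : A) →
      (∀ l : P, a * iota l = Coalgebra.counit (R := k) l • a) ∧
      ∀ piP : A →ₗ[k] P, (∀ (c : A) (l : P), piP (c * iota l) = piP c * l) →
        ∀ l : P, piP a * l = Coalgebra.counit (R := k) l • piP a) ∧
    (∀ a : A, R * ((1 : A) ⊗ₜ[k] a) = (1 : A) ⊗ₜ[k] a →
      (∀ l : Q, kappa l * a = Coalgebra.counit (R := k) l • a) ∧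
      ∀ piH : A →ₗ[k] Q, (∀ (c : A) (l : Q), piH (kappa l * c) = l * piH c) →
        ∀ l : Q, l * piH a = Coalgebra.counit (R := k) l • piH a) := by
  constructor
  · intro a ha
    have hmain : ∀ l : P, a * iota l = Coalgebra.counit (R := k) l • a :=
      fun l => right_inv_mul R hinv iota hiota ha l
    refine ⟨hmain, ?_⟩
    intro piP hpi l
    have h1 : piP a * l = piP (a * iota l) := by rw [hpi a l]
    rw [h1, hmain l, map_smul]
  · intro a ha
    have hmain : ∀ l : Q, kappa l * a = Coalgebra.counit (R := k) l • a :=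
      fun l => left_inv_mul R hinv kappa hkappa ha l
    refine ⟨hmain, ?_⟩
    intro piH hpi l
    have h1 : l * piH a = piH (kappa l * a) := by rw [hpi a l]
    rw [h1, hmain l, map_smul]

end PentagonPaper
end

section
/- Let k be a field, A a k-algebra, and R ∈ A⊗A an invertible solution of the pentagon equation. Then the map Δ_r : A → A⊗A, Δ_r(a) = R⁻¹(1_A⊗a)R, is a map of algebras and is coassociative: (Δ_r⊗id)∘Δ_r = (id⊗Δ_r)∘Δ_r; that is, (A, ·, Δ_r) is a bialgebra without counit. -/
open TensorProduct

set_option maxHeartbeats 1000000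
set_option synthInstance.maxHeartbeats 200000

namespace PentagonPaper

section Aux

variable {k : Type*} [Field k] {A : Type*} [Ring A] [Algebra k A]

lemma deltaR_apply (R : A ⊗[k] A) (a : A) :
    deltaR R a = Ring.inverse R * ((1:A) ⊗ₜ[k] a) * R := rfl

lemma leg12_comm (x : A ⊗[k] A) (c : A) :
    leg12 k A x * ((1:A) ⊗ₜ[k] ((1:A) ⊗ₜ[k] c)) =
      ((1:A) ⊗ₜ[k] ((1:A) ⊗ₜ[k] c)) * leg12 k A x := by
  induction x using TensorProduct.induction_on with
  | zero => simp
  | tmul a b =>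
      simp [leg12, Algebra.TensorProduct.tmul_mul_tmul]
  | add x y hx hy => simp only [map_add, add_mul, mul_add, hx, hy]

lemma assoc_tmul' (x : A ⊗[k] A) (b : A) :
    (TensorProduct.assoc k A A A) (x ⊗ₜ[k] b) =
      leg12 k A x * ((1:A) ⊗ₜ[k] ((1:A) ⊗ₜ[k] b)) := by
  induction x using TensorProduct.induction_on with
  | zero => simp
  | tmul p q =>
      simp [leg12, Algebra.TensorProduct.tmul_mul_tmul]
  | add x y hx hy =>
      simp only [TensorProduct.add_tmul, map_add, add_mul, hx, hy]

lemma rT (R : A ⊗[k] A) (x : A ⊗[k] A) :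
    (TensorProduct.assoc k A A A) (LinearMap.rTensor A (deltaR R) x) =
      leg12 k A (Ring.inverse R) * leg23 k A x * leg12 k A R := by
  induction x using TensorProduct.induction_on with
  | zero => simp
  | tmul a b =>
      rw [LinearMap.rTensor_tmul, deltaR_apply, assoc_tmul', map_mul, map_mul]
      rw [mul_assoc (leg12 k A (Ring.inverse R) * leg12 k A ((1:A) ⊗ₜ[k] a)),
        leg12_comm]
      have hQX : leg12 k A ((1:A) ⊗ₜ[k] a) * ((1:A) ⊗ₜ[k] ((1:A) ⊗ₜ[k] b)) =
          leg23 k A (a ⊗ₜ[k] b) := by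
        simp [leg12, leg23, Algebra.TensorProduct.tmul_mul_tmul]
      simp only [mul_assoc]
      rw [← hQX, mul_assoc (leg12 k A ((1:A) ⊗ₜ[k] a))]
  | add x y hx hy =>
      simp only [map_add, mul_add, add_mul, hx, hy]

lemma lT (R : A ⊗[k] A) (x : A ⊗[k] A) :
    LinearMap.lTensor A (deltaR R) x =
      leg23 k A (Ring.inverse R) * leg13 k A x * leg23 k A R := by
  have h1 : ∀ (a : A) (y z : A ⊗[k] A),
      (a ⊗ₜ[k] (y * z) : A ⊗[k] (A ⊗[k] A)) = ((1:A) ⊗ₜ[k] y) * (a ⊗ₜ[k] z) := by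
    intro a y z
    rw [Algebra.TensorProduct.tmul_mul_tmul, one_mul]
  have h2 : ∀ (a : A) (y z : A ⊗[k] A),
      (a ⊗ₜ[k] (y * z) : A ⊗[k] (A ⊗[k] A)) = (a ⊗ₜ[k] y) * ((1:A) ⊗ₜ[k] z) := by
    intro a y z
    rw [Algebra.TensorProduct.tmul_mul_tmul, mul_one]
  induction x using TensorProduct.induction_on with
  | zero => simp
  | tmul a b =>
      rw [LinearMap.lTensor_tmul, deltaR_apply, mul_assoc, h1, h2]
      simp [leg23, leg13, mul_assoc]
  | add x y hx hy =>
      simp only [map_add, mul_add, add_mul, hx, hy]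

lemma conj_eq {M : Type*} [Monoid M] (U12 U13 U23 : Mˣ) (X : M)
    (hP : U12 * U13 * U23 = U23 * U12)
    (hc : (U12 : M) * X = X * (U12 : M)) :
    (↑U12⁻¹ : M) * ((↑U23⁻¹ : M) * X * (U23 : M)) * (U12 : M) =
      (↑U23⁻¹ : M) * ((↑U13⁻¹ : M) * X * (U13 : M)) * (U23 : M) := by
  have hkeyU : U13 * U23 = U12⁻¹ * (U23 * U12) := by
    rw [eq_inv_mul_iff_mul_eq, ← mul_assoc]; exact hP
  have hkeyU' : U23⁻¹ * U13⁻¹ = U12⁻¹ * (U23⁻¹ * U12) :=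
    calc U23⁻¹ * U13⁻¹ = (U13 * U23)⁻¹ := (mul_inv_rev _ _).symm
      _ = (U12⁻¹ * (U23 * U12))⁻¹ := by rw [hkeyU]
      _ = U12⁻¹ * (U23⁻¹ * U12) := by
          rw [mul_inv_rev, mul_inv_rev, inv_inv, mul_assoc]
  have hkey : (U13 : M) * (U23 : M) = (↑U12⁻¹ : M) * ((U23 : M) * (U12 : M)) := by
    have := congrArg Units.val hkeyU
    simpa [Units.val_mul] using this
  have hkey' : (↑U23⁻¹ : M) * (↑U13⁻¹ : M) = (↑U12⁻¹ : M) * ((↑U23⁻¹ : M) * (U12 : M)) := by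
    have := congrArg Units.val hkeyU'
    simpa [Units.val_mul] using this
  symm
  calc (↑U23⁻¹ : M) * ((↑U13⁻¹ : M) * X * (U13 : M)) * (U23 : M)
      = ((↑U23⁻¹ : M) * (↑U13⁻¹ : M)) * (X * ((U13 : M) * (U23 : M))) := by
        simp only [mul_assoc]
    _ = ((↑U12⁻¹ : M) * ((↑U23⁻¹ : M) * (U12 : M))) *
          (X * ((↑U12⁻¹ : M) * ((U23 : M) * (U12 : M)))) := by rw [hkey', hkey]
    _ = (↑U12⁻¹ : M) * ((↑U23⁻¹ : M) * (((U12 : M) * X * (↑U12⁻¹ : M)) *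
          ((U23 : M) * (U12 : M)))) := by simp only [mul_assoc]
    _ = (↑U12⁻¹ : M) * ((↑U23⁻¹ : M) * (X * ((U23 : M) * (U12 : M)))) := by
        rw [hc, mul_assoc X, Units.mul_inv, mul_one]
    _ = (↑U12⁻¹ : M) * ((↑U23⁻¹ : M) * X * (U23 : M)) * (U12 : M) := by
        simp only [mul_assoc]

end Aux

/-- **Statement 17.** For an invertible solution `R` of the pentagon equation, the map
`Δ_r(a) = R⁻¹(1 ⊗ a)R` is a (linear) algebra map and is coassociative, i.e. `(A, ·, Δ_r)` is a
bialgebra without counit. -/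
theorem deltaR_is_bialgebra_without_counit
    {k : Type u} [Field k] {A : Type v} [Ring A] [Algebra k A]
    (R : A ⊗[k] A) (hinv : IsUnit R) (hpent : IsPentagon R) :
    deltaR R (1 : A) = 1 ∧
    (∀ a b : A, deltaR R (a * b) = deltaR R a * deltaR R b) ∧
    (TensorProduct.assoc k A A A).toLinearMap ∘ₗ
        LinearMap.rTensor A (deltaR R) ∘ₗ deltaR R =
      LinearMap.lTensor A (deltaR R) ∘ₗ deltaR R := by
  have hIR : Ring.inverse R * R = 1 := Ring.inverse_mul_cancel R hinv
  have hRI : R * Ring.inverse R = 1 := Ring.mul_inverse_cancel R hinv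
  refine ⟨?_, ?_, ?_⟩
  · rw [deltaR_apply, ← Algebra.TensorProduct.one_def, mul_one, hIR]
  · intro a b
    have key : deltaR R a * deltaR R b =
        Ring.inverse R * (((1:A) ⊗ₜ[k] a) * (R * Ring.inverse R) * ((1:A) ⊗ₜ[k] b)) * R := by
      simp only [deltaR_apply, mul_assoc]
    rw [key, hRI, mul_one, deltaR_apply, Algebra.TensorProduct.tmul_mul_tmul, one_mul]
  · apply LinearMap.ext
    intro a
    simp only [LinearMap.comp_apply, LinearEquiv.coe_coe]
    rw [rT, lT, deltaR_apply, map_mul, map_mul, map_mul, map_mul]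
    -- express via units
    set u := hinv.unit with hu_def
    have hu : (u : A ⊗[k] A) = R := hinv.unit_spec
    have hinvR : Ring.inverse R = ((u⁻¹ : (A ⊗[k] A)ˣ) : A ⊗[k] A) := by
      rw [← hu, Ring.inverse_unit]
    set U12 : (A ⊗[k] (A ⊗[k] A))ˣ := Units.map (leg12 k A : A ⊗[k] A →* A ⊗[k] (A ⊗[k] A)) u
      with hU12_def
    set U13 : (A ⊗[k] (A ⊗[k] A))ˣ := Units.map (leg13 k A : A ⊗[k] A →* A ⊗[k] (A ⊗[k] A)) u
      with hU13_def
    set U23 : (A ⊗[k] (A ⊗[k] A))ˣ := Units.map (leg23 k A : A ⊗[k] A →* A ⊗[k] (A ⊗[k] A)) u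
      with hU23_def
    have hU12 : (U12 : A ⊗[k] (A ⊗[k] A)) = leg12 k A R := by
      simp [hU12_def, hu]
    have hU13 : (U13 : A ⊗[k] (A ⊗[k] A)) = leg13 k A R := by
      simp [hU13_def, hu]
    have hU23 : (U23 : A ⊗[k] (A ⊗[k] A)) = leg23 k A R := by
      simp [hU23_def, hu]
    have hU12i : ((U12⁻¹ : (A ⊗[k] (A ⊗[k] A))ˣ) : A ⊗[k] (A ⊗[k] A)) =
        leg12 k A (Ring.inverse R) := by
      simp [hU12_def, hinvR]
    have hU13i : ((U13⁻¹ : (A ⊗[k] (A ⊗[k] A))ˣ) : A ⊗[k] (A ⊗[k] A)) =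
        leg13 k A (Ring.inverse R) := by
      simp [hU13_def, hinvR]
    have hU23i : ((U23⁻¹ : (A ⊗[k] (A ⊗[k] A))ˣ) : A ⊗[k] (A ⊗[k] A)) =
        leg23 k A (Ring.inverse R) := by
      simp [hU23_def, hinvR]
    have hP : U12 * U13 * U23 = U23 * U12 := by
      apply Units.ext
      simp only [Units.val_mul, hU12, hU13, hU23]
      exact hpent
    have hc : (U12 : A ⊗[k] (A ⊗[k] A)) * ((1:A) ⊗ₜ[k] ((1:A) ⊗ₜ[k] a)) =
        ((1:A) ⊗ₜ[k] ((1:A) ⊗ₜ[k] a)) * (U12 : A ⊗[k] (A ⊗[k] A)) := by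
      rw [hU12]; exact leg12_comm R a
    have h23X : leg23 k A ((1:A) ⊗ₜ[k] a) = (1:A) ⊗ₜ[k] ((1:A) ⊗ₜ[k] a) := by
      simp [leg23]
    have h13X : leg13 k A ((1:A) ⊗ₜ[k] a) = (1:A) ⊗ₜ[k] ((1:A) ⊗ₜ[k] a) := by
      simp [leg13]
    rw [h23X, h13X, ← hU12, ← hU13, ← hU23, ← hU12i, ← hU13i, ← hU23i]
    exact conj_eq U12 U13 U23 _ hP hc

end PentagonPaper
end

section
/- Let k be a field, A a k-algebra, and R ∈ A⊗A an invertible solution of the pentagon equation. Then the map Δ_l : A → A⊗A, Δ_l(a) = R(a⊗1_A)R⁻¹, is a map of algebras and is coassociative: (Δ_l⊗id)∘Δ_l = (id⊗Δ_l)∘Δ_l; that is, (A, ·, Δ_l) is a bialgebra without counit. -/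
open TensorProduct

set_option maxHeartbeats 1000000
set_option synthInstance.maxHeartbeats 200000

namespace PentagonPaper

section Aux

variable {k : Type*} [Field k] {A : Type*} [Ring A] [Algebra k A]

/-- conjugation-type map `a ↦ R (a ⊗ 1) S`. -/
noncomputable def conjMap (R S : A ⊗[k] A) : A →ₗ[k] A ⊗[k] A where
  toFun a := R * (a ⊗ₜ[k] (1 : A)) * S
  map_add' a b := by simp [TensorProduct.add_tmul, mul_add, add_mul]
  map_smul' c a := by
    simp only [RingHom.id_apply]
    rw [← TensorProduct.smul_tmul', mul_smul_comm, smul_mul_assoc]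

lemma deltaL_eq_conjMap (R : A ⊗[k] A) : deltaL R = conjMap R (Ring.inverse R) := rfl

lemma key1 (R S x : A ⊗[k] A) :
    (TensorProduct.assoc k A A A) (LinearMap.rTensor A (conjMap R S) x) =
      leg12 k A R * leg13 k A x * leg12 k A S := by
  induction x using TensorProduct.induction_on with
  | zero => simp
  | add x y hx hy => simp [hx, hy, mul_add, add_mul]
  | tmul u v =>
    simp only [LinearMap.rTensor_tmul]
    show (TensorProduct.assoc k A A A) ((R * u ⊗ₜ[k] (1 : A) * S) ⊗ₜ[k] v) = _
    induction R using TensorProduct.induction_on with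
    | zero => simp
    | add x y hx hy =>
      simp only [add_mul, TensorProduct.add_tmul, map_add]
      rw [hx, hy]
    | tmul p q =>
      induction S using TensorProduct.induction_on with
      | zero => simp
      | add x y hx hy =>
        simp only [mul_add, TensorProduct.add_tmul, map_add]
        rw [hx, hy]
      | tmul s t =>
        simp [leg12, leg13, Algebra.TensorProduct.tmul_mul_tmul, mul_assoc]

lemma key2 (R S x : A ⊗[k] A) :
    LinearMap.lTensor A (conjMap R S) x = leg23 k A R * leg12 k A x * leg23 k A S := by
  induction x using TensorProduct.induction_on with
  | zero => simp
  | add x y hx hy => simp [hx, hy, mul_add, add_mul]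
  | tmul u v =>
    simp only [LinearMap.lTensor_tmul]
    show u ⊗ₜ[k] (R * v ⊗ₜ[k] (1 : A) * S) = _
    induction R using TensorProduct.induction_on with
    | zero => simp
    | add x y hx hy =>
      simp only [add_mul, TensorProduct.tmul_add, map_add]
      rw [hx, hy]
    | tmul p q =>
      induction S using TensorProduct.induction_on with
      | zero => simp
      | add x y hx hy =>
        simp only [mul_add, TensorProduct.tmul_add, map_add]
        rw [hx, hy]
      | tmul s t =>
        simp [leg12, leg23, Algebra.TensorProduct.tmul_mul_tmul, mul_assoc]

lemma key3 (S : A ⊗[k] A) (a : A) :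
    (a ⊗ₜ[k] (1 : A ⊗[k] A)) * leg23 k A S = leg23 k A S * (a ⊗ₜ[k] (1 : A ⊗[k] A)) := by
  induction S using TensorProduct.induction_on with
  | zero => simp
  | add x y hx hy => simp [mul_add, add_mul, hx, hy]
  | tmul s t => simp [leg23, Algebra.TensorProduct.tmul_mul_tmul]

end Aux

/-- **Statement 18.** For an invertible solution `R` of the pentagon equation, the map
`Δ_l(a) = R(a ⊗ 1)R⁻¹` is a (linear) algebra map and is coassociative, i.e. `(A, ·, Δ_l)` is a
bialgebra without counit. -/
theorem deltaL_is_bialgebra_without_counit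
    {k : Type u} [Field k] {A : Type v} [Ring A] [Algebra k A]
    (R : A ⊗[k] A) (hinv : IsUnit R) (hpent : IsPentagon R) :
    deltaL R (1 : A) = 1 ∧
    (∀ a b : A, deltaL R (a * b) = deltaL R a * deltaL R b) ∧
    (TensorProduct.assoc k A A A).toLinearMap ∘ₗ
        LinearMap.rTensor A (deltaL R) ∘ₗ deltaL R =
      LinearMap.lTensor A (deltaL R) ∘ₗ deltaL R := by
  obtain ⟨u, rfl⟩ := hinv
  have hRinv : Ring.inverse (u : A ⊗[k] A) = ((u⁻¹ : (A ⊗[k] A)ˣ) : A ⊗[k] A) :=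
    Ring.inverse_unit u
  refine ⟨?_, ?_, ?_⟩
  · show (u : A ⊗[k] A) * ((1 : A) ⊗ₜ[k] (1 : A)) * Ring.inverse (u : A ⊗[k] A) = 1
    rw [← Algebra.TensorProduct.one_def, mul_one, hRinv, Units.mul_inv]
  · intro a b
    show (u : A ⊗[k] A) * ((a * b) ⊗ₜ[k] (1 : A)) * Ring.inverse (u : A ⊗[k] A) =
      ((u : A ⊗[k] A) * (a ⊗ₜ[k] (1 : A)) * Ring.inverse (u : A ⊗[k] A)) *
        ((u : A ⊗[k] A) * (b ⊗ₜ[k] (1 : A)) * Ring.inverse (u : A ⊗[k] A))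
    rw [hRinv]
    have : (a * b) ⊗ₜ[k] (1 : A) = (a ⊗ₜ[k] (1 : A)) * (b ⊗ₜ[k] (1 : A)) := by
      simp [Algebra.TensorProduct.tmul_mul_tmul]
    rw [this]
    simp only [mul_assoc, Units.inv_mul_cancel_left]
  · ext a
    simp only [LinearMap.comp_apply, LinearEquiv.coe_coe]
    rw [deltaL_eq_conjMap, key1, key2]
    set U12 : (A ⊗[k] (A ⊗[k] A))ˣ := Units.map (leg12 k A).toMonoidHom u with hU12
    set U13 : (A ⊗[k] (A ⊗[k] A))ˣ := Units.map (leg13 k A).toMonoidHom u with hU13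
    set U23 : (A ⊗[k] (A ⊗[k] A))ˣ := Units.map (leg23 k A).toMonoidHom u with hU23
    have c12 : leg12 k A (u : A ⊗[k] A) = (U12 : A ⊗[k] (A ⊗[k] A)) := rfl
    have c13 : leg13 k A (u : A ⊗[k] A) = (U13 : A ⊗[k] (A ⊗[k] A)) := rfl
    have c23 : leg23 k A (u : A ⊗[k] A) = (U23 : A ⊗[k] (A ⊗[k] A)) := rfl
    have i12 : leg12 k A (Ring.inverse (u : A ⊗[k] A)) = ((U12⁻¹ : _ˣ) : A ⊗[k] (A ⊗[k] A)) := by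
      rw [hRinv]; rfl
    have i13 : leg13 k A (Ring.inverse (u : A ⊗[k] A)) = ((U13⁻¹ : _ˣ) : A ⊗[k] (A ⊗[k] A)) := by
      rw [hRinv]; rfl
    have i23 : leg23 k A (Ring.inverse (u : A ⊗[k] A)) = ((U23⁻¹ : _ˣ) : A ⊗[k] (A ⊗[k] A)) := by
      rw [hRinv]; rfl
    have hconj : conjMap (u : A ⊗[k] A) (Ring.inverse (u : A ⊗[k] A)) a =
        (u : A ⊗[k] A) * (a ⊗ₜ[k] (1 : A)) * Ring.inverse (u : A ⊗[k] A) := rfl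
    rw [hconj]
    rw [map_mul, map_mul, map_mul, map_mul]
    have e13 : leg13 k A (a ⊗ₜ[k] (1 : A)) = a ⊗ₜ[k] (1 : A ⊗[k] A) := by
      simp only [leg13, Algebra.TensorProduct.map_tmul, AlgHom.coe_id, id_eq, map_one]
    have e12 : leg12 k A (a ⊗ₜ[k] (1 : A)) = a ⊗ₜ[k] (1 : A ⊗[k] A) := by
      simp only [leg12, Algebra.TensorProduct.map_tmul, AlgHom.coe_id, id_eq,
        Algebra.TensorProduct.includeLeft_apply]
      rw [← Algebra.TensorProduct.one_def]
    rw [e13, e12, c12, c13, c23, i12, i13, i23]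
    set e : A ⊗[k] (A ⊗[k] A) := a ⊗ₜ[k] (1 : A ⊗[k] A) with he
    have pent : (U12 : A ⊗[k] (A ⊗[k] A)) * U13 * U23 = (U23 : A ⊗[k] (A ⊗[k] A)) * U12 := hpent
    have pentU : U12 * U13 * U23 = U23 * U12 := Units.ext pent
    have hcomm : e * (U23 : A ⊗[k] (A ⊗[k] A)) = (U23 : A ⊗[k] (A ⊗[k] A)) * e := by
      rw [he, ← c23]; exact key3 (k := k) (u : A ⊗[k] A) a
    have hconj23 : (U23 : A ⊗[k] (A ⊗[k] A)) * e * ↑U23⁻¹ = e := by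
      rw [← hcomm, Units.mul_inv_cancel_right]
    calc (U12 : A ⊗[k] (A ⊗[k] A)) * ((U13 : A ⊗[k] (A ⊗[k] A)) * e * ↑U13⁻¹) * ↑U12⁻¹
        = ↑(U12 * U13) * e * ↑(U12 * U13)⁻¹ := by
          simp [mul_assoc]
      _ = ↑(U12 * U13) * (↑U23 * e * ↑U23⁻¹) * ↑(U12 * U13)⁻¹ := by
          rw [hconj23]
      _ = ↑(U12 * U13 * U23) * e * ↑(U12 * U13 * U23)⁻¹ := by
          simp [mul_assoc]
      _ = ↑(U23 * U12) * e * ↑(U23 * U12)⁻¹ := by rw [pentU]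
      _ = (U23 : A ⊗[k] (A ⊗[k] A)) * ((U12 : A ⊗[k] (A ⊗[k] A)) * e * ↑U12⁻¹) * ↑U23⁻¹ := by
          simp [mul_assoc]

end PentagonPaper
end

section
/- Let k be a field, n a positive integer, and R = Σ_{i,j=1}^n e_{ij} ⊗ A_{ij} ∈ M_n(k)⊗M_n(k) an invertible element, where (e_{ij}) is the canonical matrix unit basis of M_n(k) and A_{ij} ∈ M_n(k) (equivalently, R is the invertible block matrix (A_{ij})_{i,j=1}^n ∈ M_{n²}(k) under the Kronecker-product identification M_n(k)⊗M_n(k) ≅ M_{n²}(k)). Then R is a solution of the pentagon equation if and only if Σ_{j=1}^n A_{ij} ⊗ A_{jp} = R(A_{ip} ⊗ I_n)R⁻¹ for all i, p = 1,…,n. -/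
open TensorProduct

set_option maxHeartbeats 1000000
set_option synthInstance.maxHeartbeats 200000

namespace PentagonPaper

/-! Identify `Mₙ(k) ⊗ B` with `n × n` matrices over `B` via `eᵢⱼ ⊗ b ↦ b` at position `(i, j)`.
Then `R` is the block matrix `(Aᵢⱼ)`, `R¹²` and `R¹³` are the matrices `(Aᵢⱼ ⊗ 1)` and `(1 ⊗ Aᵢⱼ)`,
and `R²³ = 1 ⊗ R` is the scalar matrix `R`. The pentagon equation becomes an equality of matrices
over `Mₙ(k) ⊗ Mₙ(k)` whose `(i, p)` entry reads `(∑ⱼ Aᵢⱼ ⊗ Aⱼₚ) R = R (Aᵢₚ ⊗ 1)`, and invertibility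
of `R` turns this into the stated conjugation. -/

open Matrix

section BlockEquiv

variable (n : Type*) [Fintype n] [DecidableEq n] (k : Type*) [CommSemiring k]
  (B : Type*) [Semiring B] [Algebra k B]

noncomputable def blockEquiv : Matrix n n B ≃ₐ[k] Matrix n n k ⊗[k] B :=
  (matrixEquivTensor n k B).trans (Algebra.TensorProduct.comm k B (Matrix n n k))

variable {n k B}

theorem blockEquiv_apply (N : Matrix n n B) :
    blockEquiv n k B N = ∑ i, ∑ j, single i j (1 : k) ⊗ₜ[k] N i j := by
  simp [blockEquiv, Fintype.sum_prod_type]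

theorem blockEquiv_scalar (r : B) :
    blockEquiv n k B (scalar n r) = (1 : Matrix n n k) ⊗ₜ[k] r := by
  rw [← AlgEquiv.eq_symm_apply]
  ext i j
  simp [blockEquiv, AlgEquiv.symm_trans_apply, one_apply, diagonal_apply]

theorem map_blockEquiv {C : Type*} [Semiring C] [Algebra k C] (f : B →ₐ[k] C)
    (N : Matrix n n B) :
    Algebra.TensorProduct.map (AlgHom.id k _) f (blockEquiv n k B N) =
      blockEquiv n k C (N.map f) := by
  simp [blockEquiv_apply, map_sum]

end BlockEquiv

section BlockMatrix

variable {n : Type*} [Fintype n] [DecidableEq n] {k : Type*} [Field k]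

theorem isPentagon_blockEquiv_iff (M : Matrix n n (Matrix n n k)) :
    IsPentagon (blockEquiv n k _ M) ↔ ∀ i p,
      (∑ j, M i j ⊗ₜ[k] M j p) * blockEquiv n k _ M =
        blockEquiv n k _ M * (M i p ⊗ₜ[k] (1 : Matrix n n k)) := by
  set R := blockEquiv n k _ M
  have h23 : leg23 k _ R = blockEquiv n k _ (scalar n R) := (blockEquiv_scalar R).symm
  rw [IsPentagon, leg12, leg13, h23, map_blockEquiv, map_blockEquiv, ← map_mul, ← map_mul,
    ← map_mul, EquivLike.apply_eq_iff_eq, ← Matrix.ext_iff]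
  refine forall_congr' fun i => forall_congr' fun p => ?_
  rw [scalar_apply, mul_diagonal, diagonal_mul]
  simp only [mul_apply, map_apply,
    Algebra.TensorProduct.includeLeft_apply, Algebra.TensorProduct.includeRight_apply,
    Algebra.TensorProduct.tmul_mul_tmul, mul_one, one_mul]

end BlockMatrix

/-- **Statement 19.** Writing an invertible `R ∈ Mₙ(k) ⊗ Mₙ(k)` as
`R = ∑_{i,j} e_{ij} ⊗ A_{ij}` (i.e. as the block matrix `(A_{ij})` under the Kronecker-product
identification), `R` is a solution of the pentagon equation if and only if
`∑_j A_{ij} ⊗ A_{jp} = R(A_{ip} ⊗ Iₙ)R⁻¹` for all `i, p`. -/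
theorem pentagon_iff_block_condition
    {k : Type u} [Field k] {n : ℕ}
    (M : Fin n → Fin n → Matrix (Fin n) (Fin n) k)
    (R : Matrix (Fin n) (Fin n) k ⊗[k] Matrix (Fin n) (Fin n) k)
    (hR : R = ∑ i : Fin n, ∑ j : Fin n,
      (Matrix.single i j (1 : k)) ⊗ₜ[k] M i j)
    (hinv : IsUnit R) :
    IsPentagon R ↔
      ∀ i p : Fin n,
        (∑ j : Fin n, M i j ⊗ₜ[k] M j p) =
          R * (M i p ⊗ₜ[k] (1 : Matrix (Fin n) (Fin n) k)) * Ring.inverse R := by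
  have hRM : R = blockEquiv (Fin n) k _ (Matrix.of M) := by rw [hR, blockEquiv_apply]; rfl
  simp only [Ring.eq_mul_inverse_iff_mul_eq _ _ _ hinv]
  subst hRM
  exact isPentagon_blockEquiv_iff (Matrix.of M)

end PentagonPaper
end
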